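/- arXiv:1811.11789 — 4 statements merged into one kernel-verified Lean document; each statement's English description precedes it below -/
import Mathlib

section
/- For every n ≥ 1, if a 2^n × 2^n complex matrix M commutes with every element of the n-qubit Pauli group P_n, then M is a scalar multiple of the identity matrix. -/
/-- The matrix of the Pauli `X` operator acting on the `j`-th qubit of `n` qubits
(and as the identity on all other tensor factors). -/
noncomputable def XMat (n : ℕ) (j : Fin n) :
    Matrix (Fin n → Fin 2) (Fin n → Fin 2) ℂ :=
  Matrix.of fun v w => if v j ≠ w j ∧ ∀ i, i ≠ j → v i = w i then 1 else 0

/-- The matrix of the Pauli `Z` operator acting on the `j`-th qubit of `n` qubits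
(and as the identity on all other tensor factors). -/
noncomputable def ZMat (n : ℕ) (j : Fin n) :
    Matrix (Fin n → Fin 2) (Fin n → Fin 2) ℂ :=
  Matrix.of fun v w => if v = w then (if v j = 1 then -1 else 1) else 0

/-- The `n`-qubit Pauli group: the subgroup of the unitary group `U(2^n)` generated by
`i·I` together with `X_j` and `Z_j` for each qubit `j`. -/
noncomputable def PauliGroup (n : ℕ) :
    Subgroup (Matrix.unitaryGroup (Fin n → Fin 2) ℂ) :=
  Subgroup.closure { U : Matrix.unitaryGroup (Fin n → Fin 2) ℂ |
    (U : Matrix (Fin n → Fin 2) (Fin n → Fin 2) ℂ)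
        = Complex.I • (1 : Matrix (Fin n → Fin 2) (Fin n → Fin 2) ℂ)
    ∨ ∃ j : Fin n, (U : Matrix (Fin n → Fin 2) (Fin n → Fin 2) ℂ) = XMat n j
        ∨ (U : Matrix (Fin n → Fin 2) (Fin n → Fin 2) ℂ) = ZMat n j }

/-- flip the `j`-th coordinate -/
def flp {n : ℕ} (j : Fin n) (v : Fin n → Fin 2) : Fin n → Fin 2 :=
  Function.update v j (1 - v j)

lemma fin2_sub_sub (a : Fin 2) : 1 - (1 - a) = a := by revert a; decide

lemma fin2_ne (a b : Fin 2) (h : a ≠ b) : b = 1 - a := by revert h; revert a b; decide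

lemma fin2_ne' (a : Fin 2) : 1 - a ≠ a := by revert a; decide

lemma flp_flp {n : ℕ} (j : Fin n) (v : Fin n → Fin 2) : flp j (flp j v) = v := by
  funext i
  by_cases h : i = j
  · subst h; simp [flp, fin2_sub_sub]
  · simp [flp, Function.update_of_ne h]

lemma XMat_apply {n : ℕ} (j : Fin n) (v w : Fin n → Fin 2) :
    XMat n j v w = if w = flp j v then 1 else 0 := by
  unfold XMat
  simp only [Matrix.of_apply]
  congr 1
  simp only [eq_iff_iff]
  constructor
  · rintro ⟨h1, h2⟩
    funext i
    by_cases h : i = j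
    · subst h
      simp [flp, fin2_ne _ _ h1]
    · simp [flp, Function.update_of_ne h, (h2 i h).symm]
  · rintro rfl
    refine ⟨?_, fun i hi => ?_⟩
    · simp [flp]
      exact (fin2_ne' (v j)).symm
    · simp [flp, Function.update_of_ne hi]

lemma XMat_mem {n : ℕ} (j : Fin n) : XMat n j ∈ Matrix.unitaryGroup (Fin n → Fin 2) ℂ := by
  have hstar : star (XMat n j) = XMat n j := by
    ext v w
    have hiff : (v = flp j w) ↔ (w = flp j v) :=
      ⟨fun h => by rw [h, flp_flp], fun h => by rw [h, flp_flp]⟩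
    simp only [Matrix.star_apply, XMat_apply, apply_ite, star_one, star_zero, hiff]
    split_ifs with h <;> simp [h]
  have hsq : XMat n j * XMat n j = 1 := by
    ext v w
    simp only [Matrix.mul_apply, XMat_apply, ite_mul, one_mul, zero_mul,
      Finset.sum_ite_eq' , Finset.mem_univ, if_true]
    rw [flp_flp]
    simp [Matrix.one_apply, eq_comm]
  constructor <;> rw [hstar, hsq]

lemma ZMat_mem {n : ℕ} (j : Fin n) : ZMat n j ∈ Matrix.unitaryGroup (Fin n → Fin 2) ℂ := by
  have hstar : star (ZMat n j) = ZMat n j := by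
    ext v w
    rcases eq_or_ne v w with rfl | h
    · rcases eq_or_ne (v j) 1 with h1 | h1 <;>
        simp [ZMat, Matrix.star_apply, h1]
    · simp [ZMat, Matrix.star_apply, h, Ne.symm h]
  have hsq : ZMat n j * ZMat n j = 1 := by
    ext v w
    simp only [Matrix.mul_apply, ZMat, Matrix.of_apply, ite_mul, zero_mul,
      Finset.sum_ite_eq, Finset.mem_univ, if_true]
    rcases eq_or_ne v w with rfl | h
    · rcases eq_or_ne (v j) 1 with h1 | h1 <;> simp [h1, Matrix.one_apply]
    · simp [h, Matrix.one_apply]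
  constructor <;> rw [hstar, hsq]

/-- For every `n ≥ 1`, any `2^n × 2^n` complex matrix commuting with every element of the
`n`-qubit Pauli group is a scalar multiple of the identity. -/
theorem pauliGroup_commutant_scalar (n : ℕ) (hn : 1 ≤ n)
    (M : Matrix (Fin n → Fin 2) (Fin n → Fin 2) ℂ)
    (hM : ∀ P ∈ PauliGroup n,
      M * (P : Matrix (Fin n → Fin 2) (Fin n → Fin 2) ℂ)
        = (P : Matrix (Fin n → Fin 2) (Fin n → Fin 2) ℂ) * M) :
    ∃ c : ℂ, M = c • (1 : Matrix (Fin n → Fin 2) (Fin n → Fin 2) ℂ) := by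
  -- commutation with the generators
  have hX : ∀ j, M * XMat n j = XMat n j * M := fun j =>
    hM ⟨XMat n j, XMat_mem j⟩
      (Subgroup.subset_closure (Or.inr ⟨j, Or.inl rfl⟩))
  have hZ : ∀ j, M * ZMat n j = ZMat n j * M := fun j =>
    hM ⟨ZMat n j, ZMat_mem j⟩
      (Subgroup.subset_closure (Or.inr ⟨j, Or.inr rfl⟩))
  -- off-diagonal entries vanish
  have hdiag : ∀ v w, v ≠ w → M v w = 0 := by
    intro v w hvw
    obtain ⟨j, hj⟩ : ∃ j, v j ≠ w j := Function.ne_iff.mp hvw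
    have h := congrFun (congrFun (hZ j) v) w
    simp only [Matrix.mul_apply, ZMat, Matrix.of_apply, mul_ite, ite_mul, mul_zero,
      zero_mul, mul_one, mul_neg, Finset.sum_ite_eq, Finset.sum_ite_eq',
      Finset.mem_univ, if_true] at h
    rcases eq_or_ne (v j) 1 with h1 | h1 <;> rcases eq_or_ne (w j) 1 with h2 | h2
    · exact absurd (h1.trans h2.symm) hj
    · simp only [h1, h2, if_true, if_false] at h
      linear_combination h / 2
    · simp only [h1, h2, if_true, if_false] at h
      linear_combination -h / 2
    · have : v j = w j := by omega
      exact absurd this hj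
  -- diagonal entries are all equal
  have hflip : ∀ (j : Fin n) (v : Fin n → Fin 2), M v v = M (flp j v) (flp j v) := by
    intro j v
    have hcond : ∀ x, (flp j v = flp j x) ↔ (x = v) := fun x =>
      ⟨fun h => by rw [← flp_flp j x, ← h, flp_flp], fun h => by rw [h]⟩
    have hL : (M * XMat n j) v (flp j v) = M v v := by
      simp [Matrix.mul_apply, XMat_apply, mul_ite, hcond, Finset.sum_ite_eq']
    have hR : (XMat n j * M) v (flp j v) = M (flp j v) (flp j v) := by
      simp [Matrix.mul_apply, XMat_apply, ite_mul, Finset.sum_ite_eq']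
    rw [← hL, ← hR, hX j]
  have hconst : ∀ v w, M v v = M w w := by
    have key : ∀ (s : Finset (Fin n)) (v w : Fin n → Fin 2),
        (∀ i ∉ s, v i = w i) → M v v = M w w := by
      intro s
      induction s using Finset.induction_on with
      | empty =>
        intro v w h
        have : v = w := funext fun i => h i (Finset.notMem_empty i)
        rw [this]
      | @insert a s ha ih =>
        intro v w h
        by_cases hva : v a = w a
        · exact ih v w fun i hi => by
            rcases eq_or_ne i a with rfl | hia
            · exact hva
            · exact h i (by simp [hia, hi])
        · have hw : w a = 1 - v a := fin2_ne _ _ hva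
          have step : M v v = M (flp a v) (flp a v) := hflip a v
          rw [step]
          refine ih (flp a v) w fun i hi => ?_
          rcases eq_or_ne i a with rfl | hia
          · simp [flp, hw]
          · simp only [flp, Function.update_of_ne hia]
            exact h i (by simp [hia, hi])
    intro v w
    exact key Finset.univ v w (fun i hi => absurd (Finset.mem_univ i) hi)
  refine ⟨M (fun _ => 0) (fun _ => 0), ?_⟩
  ext v w
  rcases eq_or_ne v w with rfl | h
  · simp [Matrix.one_apply, hconst v (fun _ => 0)]
  · simp [Matrix.one_apply, h, hdiag v w h]
end

section
/- For every n ≥ 1, the quotient of the Clifford group (the normalizer of the n-qubit Pauli group P_n in U(2^n)) by its subgroup of unitary scalar multiples of the identity is a finite group. -/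
set_option synthInstance.maxHeartbeats 400000 in
/-- The subgroup of the Clifford group (the normalizer of the Pauli group in `U(2^n)`)
consisting of unitary scalar multiples of the identity. -/
noncomputable def scalarSubgroup (n : ℕ) : Subgroup (Subgroup.normalizer (PauliGroup n : Set (Matrix.unitaryGroup (Fin n → Fin 2) ℂ))) where
  carrier := { V | ∃ c : ℂ,
    ((V : Matrix.unitaryGroup (Fin n → Fin 2) ℂ) :
        Matrix (Fin n → Fin 2) (Fin n → Fin 2) ℂ)
      = c • (1 : Matrix (Fin n → Fin 2) (Fin n → Fin 2) ℂ) }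
  one_mem' := ⟨1, by rw [one_smul]; rfl⟩
  mul_mem' := by
    rintro a b ⟨c, hc⟩ ⟨d, hd⟩
    refine ⟨c * d, ?_⟩
    push_cast
    rw [hc, hd, smul_mul_smul_comm, one_mul]
  inv_mem' := by
    rintro a ⟨c, hc⟩
    refine ⟨starRingEnd ℂ c, ?_⟩
    have h : ((a⁻¹ : Subgroup.normalizer (PauliGroup n : Set (Matrix.unitaryGroup (Fin n → Fin 2) ℂ))) :
          Matrix (Fin n → Fin 2) (Fin n → Fin 2) ℂ)
        = star ((a : Subgroup.normalizer (PauliGroup n : Set (Matrix.unitaryGroup (Fin n → Fin 2) ℂ))) :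
            Matrix (Fin n → Fin 2) (Fin n → Fin 2) ℂ) := rfl
    rw [h, hc, star_smul, star_one]
    rfl

namespace Matrix

variable {ι : Type*} [Fintype ι] [DecidableEq ι]

lemma permMatrix_mul_diagonal {R : Type*} [NonAssocSemiring R] (σ : Equiv.Perm ι) (d : ι → R) :
    σ.permMatrix R * diagonal d = diagonal (d ∘ σ) * σ.permMatrix R := by
  rw [PEquiv.toMatrix_toPEquiv_mul, PEquiv.mul_toMatrix_toPEquiv]
  ext v w
  simp [diagonal_apply, Equiv.eq_symm_apply]

lemma permMatrix_mem_unitaryGroup (σ : Equiv.Perm ι) :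
    σ.permMatrix ℂ ∈ unitaryGroup ι ℂ := by
  rw [mem_unitaryGroup_iff', star_eq_conjTranspose, conjTranspose_permMatrix, ← permMatrix_mul,
    mul_inv_cancel, permMatrix_one]

lemma diagonal_mem_unitaryGroup {d : ι → ℂ} (hd : ∀ i, star (d i) * d i = 1) :
    diagonal d ∈ unitaryGroup ι ℂ := by
  rw [mem_unitaryGroup_iff', star_eq_conjTranspose, diagonal_conjTranspose, diagonal_mul_diagonal,
    ← diagonal_one]
  exact congrArg diagonal (funext hd)

lemma apply_eq_zero_of_commute_diagonal {R : Type*} [CommRing R] [IsDomain R] {A : Matrix ι ι R}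
    {d : ι → R} (hA : Commute A (diagonal d)) {v w : ι} (hvw : d v ≠ d w) : A v w = 0 := by
  have h := congrFun₂ hA.eq v w
  rw [mul_diagonal, diagonal_mul] at h
  have : A v w * (d w - d v) = 0 := by linear_combination h
  exact (mul_eq_zero.mp this).resolve_right (sub_ne_zero.mpr hvw.symm)

lemma apply_apply_of_commute_permMatrix {R : Type*} [NonAssocSemiring R] {A : Matrix ι ι R}
    {σ : Equiv.Perm ι} (hA : Commute A (σ.permMatrix R)) (v w : ι) : A (σ v) (σ w) = A v w := by
  have h := congrFun₂ hA.eq v (σ w)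
  rw [PEquiv.toMatrix_toPEquiv_mul, PEquiv.mul_toMatrix_toPEquiv] at h
  simpa using h.symm

variable (ι) in
def monomialSubgroup (m : ℕ) : Subgroup (unitaryGroup ι ℂ) where
  carrier := {U | ∃ (c : ι → ℂ) (σ : Equiv.Perm ι), (∀ i, c i ^ m = 1) ∧
    (U : Matrix ι ι ℂ) = diagonal c * σ.permMatrix ℂ}
  one_mem' := ⟨1, 1, fun _ => one_pow m, by simp⟩
  mul_mem' := by
    rintro U V ⟨c, σ, hc, hU⟩ ⟨d, τ, hd, hV⟩
    refine ⟨c * (d ∘ σ), τ * σ, fun i => by simp [mul_pow, hc, hd], ?_⟩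
    rw [UnitaryGroup.mul_val, hU, hV, permMatrix_mul, mul_assoc, ← mul_assoc (σ.permMatrix ℂ),
      permMatrix_mul_diagonal, ← mul_assoc, ← mul_assoc, diagonal_mul_diagonal, mul_assoc]
    rfl
  inv_mem' := by
    rintro U ⟨c, σ, hc, hU⟩
    refine ⟨star c ∘ ⇑σ⁻¹, σ⁻¹, fun i => by simp [← map_pow, hc], ?_⟩
    rw [UnitaryGroup.inv_val, hU, star_mul, star_eq_conjTranspose, star_eq_conjTranspose,
      conjTranspose_permMatrix, diagonal_conjTranspose, permMatrix_mul_diagonal]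

theorem finite_monomialSubgroup {m : ℕ} (hm : m ≠ 0) : Finite (monomialSubgroup ι m) := by
  have hroots : {z : ℂ | z ^ m = 1}.Finite :=
    (Polynomial.nthRoots m (1 : ℂ)).toFinset.finite_toSet.subset fun z hz => by
      simpa [Polynomial.mem_nthRoots (Nat.pos_of_ne_zero hm)] using hz
  have hmatrices : (Set.image2 (fun c (σ : Equiv.Perm ι) => diagonal c * σ.permMatrix ℂ)
      (Set.univ.pi fun _ => {z : ℂ | z ^ m = 1}) Set.univ).Finite :=
    (Set.Finite.pi fun _ => hroots).image2 _ Set.finite_univ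
  refine Set.Finite.to_subtype ((hmatrices.preimage Subtype.val_injective.injOn).subset ?_)
  rintro U ⟨c, σ, hc, hU⟩
  exact ⟨c, fun i _ => hc i, σ, trivial, hU.symm⟩

end Matrix

theorem Subgroup.finiteIndex_of_centralizer_subgroupOf_le {G : Type*} [Group G] {H : Subgroup G}
    [Finite H] {K : Subgroup (normalizer (H : Set G))}
    (hK : (centralizer (H : Set G)).subgroupOf (normalizer (H : Set G)) ≤ K) : K.FiniteIndex := by
  rw [← normalizerMonoidHom_ker] at hK
  exact finiteIndex_of_le hK

section Pauli

variable {n : ℕ}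

lemma XMat_eq_permMatrix (j : Fin n) :
    XMat n j = (Equiv.addRight (Pi.single j 1 : Fin n → Fin 2)).permMatrix ℂ := by
  have hflip : ∀ a b : Fin 2, a ≠ b ↔ b = a + 1 := by decide
  ext v w
  simp only [XMat, Matrix.of_apply, PEquiv.toMatrix_apply, Equiv.toPEquiv_apply,
    Option.mem_def, Option.some.injEq, Equiv.coe_addRight]
  congr 1
  refine propext ⟨fun ⟨hj, hi⟩ => funext fun i => ?_, ?_⟩
  · by_cases h : i = j
    · subst h
      simpa using ((hflip _ _).mp hj).symm
    · simp [h, hi i h]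
  · rintro rfl
    exact ⟨by simp, fun i h => by simp [h]⟩

lemma ZMat_eq_diagonal (j : Fin n) :
    ZMat n j = Matrix.diagonal fun v => if v j = 1 then -1 else 1 := by
  ext v w
  simp [ZMat, Matrix.diagonal_apply]

lemma XMat_mem_unitaryGroup (j : Fin n) :
    XMat n j ∈ Matrix.unitaryGroup (Fin n → Fin 2) ℂ :=
  XMat_eq_permMatrix j ▸ Matrix.permMatrix_mem_unitaryGroup _

lemma ZMat_mem_unitaryGroup (j : Fin n) :
    ZMat n j ∈ Matrix.unitaryGroup (Fin n → Fin 2) ℂ := by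
  rw [ZMat_eq_diagonal]
  exact Matrix.diagonal_mem_unitaryGroup fun v => by split_ifs <;> simp

lemma eq_smul_one_of_commute_XMat_ZMat {A : Matrix (Fin n → Fin 2) (Fin n → Fin 2) ℂ}
    (hX : ∀ j, Commute A (XMat n j)) (hZ : ∀ j, Commute A (ZMat n j)) : A = A 0 0 • 1 := by
  have htranslate : ∀ u v w : Fin n → Fin 2, A (v + u) (w + u) = A v w := by
    intro u
    refine Pi.single_induction (fun u => ∀ v w, A (v + u) (w + u) = A v w) u (by simp)
      (fun u u' hu hu' v w => by rw [← add_assoc, ← add_assoc, hu', hu]) fun j a => ?_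
    fin_cases a
    · simp
    · exact Matrix.apply_apply_of_commute_permMatrix (XMat_eq_permMatrix j ▸ hX j)
  ext v w
  by_cases hvw : v = w
  · subst hvw
    simpa using htranslate v 0 0
  · obtain ⟨j, hj⟩ := Function.ne_iff.mp hvw
    have hsign : (if v j = 1 then -1 else 1 : ℂ) ≠ if w j = 1 then -1 else 1 := by
      revert hj
      generalize v j = a
      generalize w j = b
      fin_cases a <;> fin_cases b <;> norm_num
    simp [hvw, Matrix.apply_eq_zero_of_commute_diagonal (ZMat_eq_diagonal j ▸ hZ j) hsign]

lemma PauliGroup_le_monomialSubgroup :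
    PauliGroup n ≤ Matrix.monomialSubgroup (Fin n → Fin 2) 4 := by
  rw [PauliGroup, Subgroup.closure_le]
  rintro U (hU | ⟨j, hU | hU⟩)
  · exact ⟨fun _ => Complex.I, 1, fun _ => Complex.I_pow_four,
      by simp [hU, Matrix.smul_one_eq_diagonal]⟩
  · exact ⟨1, Equiv.addRight (Pi.single j 1), fun _ => one_pow 4,
      by simp [hU, XMat_eq_permMatrix]⟩
  · refine ⟨fun v => if v j = 1 then -1 else 1, 1, fun v => ?_, by simp [hU, ZMat_eq_diagonal]⟩
    dsimp only
    split_ifs <;> norm_num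

lemma centralizer_PauliGroup_le_scalarSubgroup :
    (Subgroup.centralizer (PauliGroup n : Set (Matrix.unitaryGroup (Fin n → Fin 2) ℂ))).subgroupOf
      (Subgroup.normalizer (PauliGroup n : Set (Matrix.unitaryGroup (Fin n → Fin 2) ℂ)))
      ≤ scalarSubgroup n := by
  intro V hV
  rw [Subgroup.mem_subgroupOf, Subgroup.mem_centralizer_iff] at hV
  have hcomm : ∀ P ∈ PauliGroup n, Commute (V : Matrix (Fin n → Fin 2) (Fin n → Fin 2) ℂ)
      (P : Matrix (Fin n → Fin 2) (Fin n → Fin 2) ℂ) :=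
    fun P hP => (congrArg Subtype.val (hV P hP)).symm
  exact ⟨_, eq_smul_one_of_commute_XMat_ZMat
    (fun j => hcomm ⟨_, XMat_mem_unitaryGroup j⟩ (Subgroup.subset_closure (.inr ⟨j, .inl rfl⟩)))
    (fun j => hcomm ⟨_, ZMat_mem_unitaryGroup j⟩ (Subgroup.subset_closure (.inr ⟨j, .inr rfl⟩)))⟩

lemma finite_PauliGroup : Finite (PauliGroup n) :=
  have := Matrix.finite_monomialSubgroup (ι := Fin n → Fin 2) four_ne_zero
  Finite.of_injective _ (Subgroup.inclusion_injective PauliGroup_le_monomialSubgroup)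

end Pauli

theorem clifford_mod_scalars_finite_general (n : ℕ) :
    Finite ((Subgroup.normalizer (PauliGroup n : Set (Matrix.unitaryGroup (Fin n → Fin 2) ℂ)) : Subgroup (Matrix.unitaryGroup (Fin n → Fin 2) ℂ))
      ⧸ scalarSubgroup n) := by
  have := finite_PauliGroup (n := n)
  have := Subgroup.finiteIndex_of_centralizer_subgroupOf_le
    (centralizer_PauliGroup_le_scalarSubgroup (n := n))
  infer_instance

/-- The quotient of the Clifford group by its subgroup of unitary scalars is finite. -/
theorem clifford_mod_scalars_finite (n : ℕ) (hn : 1 ≤ n) :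
    Finite ((Subgroup.normalizer (PauliGroup n : Set (Matrix.unitaryGroup (Fin n → Fin 2) ℂ)) : Subgroup (Matrix.unitaryGroup (Fin n → Fin 2) ℂ))
      ⧸ scalarSubgroup n) :=
  clifford_mod_scalars_finite_general n
end

section
/- For every n ≥ 1 and k ≥ 1, if a unitary U ∈ U(2^n) lies in the k-th level 𝒞_k of the Clifford hierarchy, then for any elements P_1, …, P_k of the n-qubit Pauli group P_n, the k-fold sequential group commutator K_k is a scalar multiple of the identity matrix, where K_0 = U and K_{m} = K_{m−1} P_m K_{m−1}⁻¹ P_m⁻¹ for 1 ≤ m ≤ k. -/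
lemma fin2_ne_iff (a b : Fin 2) : a ≠ b ↔ b = a + 1 := by
  revert a b; decide

lemma fin2_sign (a : Fin 2) :
    (if a + 1 = 1 then (-1 : ℂ) else 1) = -(if a = 1 then (-1 : ℂ) else 1) := by
  fin_cases a
  · norm_num
  · norm_num [show (1 : Fin 2) + 1 = 0 from rfl]

lemma ZMat_diag (n : ℕ) (j : Fin n) :
    ZMat n j = Matrix.diagonal (fun v => if v j = 1 then (-1 : ℂ) else 1) := by
  ext v w
  rcases eq_or_ne v w with rfl | h
  · simp [ZMat, Matrix.diagonal_apply]
  · simp [ZMat, Matrix.diagonal_apply, h]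

lemma XMat_eq (n : ℕ) (j : Fin n) :
    XMat n j = Matrix.of fun v w =>
      if w = Function.update v j (v j + 1) then 1 else 0 := by
  ext v w
  simp only [XMat, Matrix.of_apply]
  congr 1
  simp only [eq_iff_iff]
  constructor
  · rintro ⟨h1, h2⟩
    funext i
    rcases eq_or_ne i j with rfl | hi
    · simpa [Function.update_self] using (fin2_ne_iff _ _).mp h1
    · simp [Function.update_of_ne hi, (h2 i hi).symm]
  · rintro rfl
    refine ⟨?_, fun i hi => by simp [Function.update_of_ne hi]⟩
    rw [Function.update_self]
    exact (fin2_ne_iff _ _).mpr rfl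

lemma XMat_mul_XMat (n : ℕ) (j l : Fin n) :
    XMat n j * XMat n l = XMat n l * XMat n j := by
  rcases eq_or_ne j l with rfl | hjl
  · rfl
  ext v w
  simp only [XMat_eq, Matrix.mul_apply, Matrix.of_apply, ite_mul, one_mul, zero_mul,
    Finset.sum_ite_eq' Finset.univ, Finset.mem_univ, if_true]
  rw [Function.update_comm hjl, Function.update_of_ne hjl, Function.update_of_ne hjl.symm]

lemma XMat_mul_ZMat (n : ℕ) (j l : Fin n) :
    XMat n j * ZMat n l
      = (if j = l then (-1 : ℂ) else 1) • (ZMat n l * XMat n j) := by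
  ext v w
  rw [ZMat_diag, Matrix.mul_diagonal, Matrix.smul_apply, Matrix.diagonal_mul]
  simp only [XMat_eq, Matrix.of_apply]
  rcases eq_or_ne w (Function.update v j (v j + 1)) with rfl | hw
  · simp only [if_pos rfl, mul_one, smul_eq_mul, mul_one]
    rcases eq_or_ne j l with rfl | hjl
    · rw [Function.update_self, if_pos rfl, fin2_sign]; ring
    · rw [Function.update_of_ne (Ne.symm hjl), if_neg hjl]; simp [mul_comm]
  · simp [hw]

/-- The Clifford hierarchy on `n` qubits: `𝒞_1` is the Pauli group, and
`𝒞_(k+1) = {U ∈ U(2^n) : U P U⁻¹ ∈ 𝒞_k for all P in the Pauli group}`.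
(The value at level `0` is junk, set to the whole unitary group.) -/
noncomputable def CliffordHierarchy (n : ℕ) :
    ℕ → Set (Matrix.unitaryGroup (Fin n → Fin 2) ℂ)
  | 0 => Set.univ
  | 1 => (PauliGroup n : Set (Matrix.unitaryGroup (Fin n → Fin 2) ℂ))
  | (k + 2) => { U | ∀ P ∈ PauliGroup n, U * P * U⁻¹ ∈ CliffordHierarchy n (k + 1) }

/-- The sequential group commutator: `seqComm U [P₁, …, P_k]` is `K_k`, where `K₀ = U` and
`K_m = K_{m-1} P_m K_{m-1}⁻¹ P_m⁻¹`. -/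
def seqComm {G : Type*} [Group G] (U : G) : List G → G
  | [] => U
  | P :: Ps => seqComm (U * P * U⁻¹ * P⁻¹) Ps

section Aux

variable {n : ℕ}

local notation "UG" => Matrix.unitaryGroup (Fin n → Fin 2) ℂ
local notation "M" => Matrix (Fin n → Fin 2) (Fin n → Fin 2) ℂ

/-- Two unitaries commute up to a (unit) scalar. -/
def PRel (U V : UG) : Prop :=
  ∃ c : ℂˣ, (U : M) * (V : M) = (c : ℂ) • ((V : M) * (U : M))

lemma coe_mul_inv (U : UG) : (U : M) * ((U⁻¹ : UG) : M) = 1 := by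
  rw [← MulMemClass.coe_mul]; simp

lemma coe_inv_mul (U : UG) : ((U⁻¹ : UG) : M) * (U : M) = 1 := by
  rw [← MulMemClass.coe_mul]; simp

lemma Rel_symm {U V : UG} (h : PRel U V) : PRel V U := by
  obtain ⟨c, hc⟩ := h
  refine ⟨c⁻¹, ?_⟩
  rw [hc, smul_smul]
  simp

lemma Rel_one {V : UG} : PRel 1 V := ⟨1, by simp⟩

lemma Rel_mul {U U' V : UG} (h : PRel U V) (h' : PRel U' V) : PRel (U * U') V := by
  obtain ⟨c, hc⟩ := h
  obtain ⟨c', hc'⟩ := h'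
  refine ⟨c' * c, ?_⟩
  rw [MulMemClass.coe_mul, mul_assoc, hc', mul_smul_comm, ← mul_assoc, hc,
    smul_mul_assoc, smul_smul, mul_assoc]
  push_cast
  ring_nf

lemma Rel_inv {U V : UG} (h : PRel U V) : PRel U⁻¹ V := by
  obtain ⟨c, hc⟩ := h
  refine ⟨c⁻¹, ?_⟩
  have key : (V : M) * ((U⁻¹ : UG) : M) = (c : ℂ) • (((U⁻¹ : UG) : M) * (V : M)) := by
    calc (V : M) * ((U⁻¹ : UG) : M)
        = ((U⁻¹ : UG) : M) * (((U : M) * (V : M)) * ((U⁻¹ : UG) : M)) := by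
          rw [← mul_assoc, ← mul_assoc, coe_inv_mul, one_mul]
      _ = ((U⁻¹ : UG) : M) * (((c : ℂ) • ((V : M) * (U : M))) * ((U⁻¹ : UG) : M)) := by
          rw [hc]
      _ = (c : ℂ) • (((U⁻¹ : UG) : M) * ((V : M) * ((U : M) * ((U⁻¹ : UG) : M)))) := by
          simp only [smul_mul_assoc, mul_smul_comm, mul_assoc]
      _ = (c : ℂ) • (((U⁻¹ : UG) : M) * (V : M)) := by rw [coe_mul_inv, mul_one]
  rw [key, smul_smul]
  simp

lemma Rel_mul_right {U V V' : UG} (h : PRel U V) (h' : PRel U V') : PRel U (V * V') :=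
  Rel_symm (Rel_mul (Rel_symm h) (Rel_symm h'))

lemma Rel_inv_right {U V : UG} (h : PRel U V) : PRel U V⁻¹ :=
  Rel_symm (Rel_inv (Rel_symm h))

lemma Rel_one_right {U : UG} : PRel U 1 := Rel_symm Rel_one

lemma gen_Rel {g h : UG}
    (hg : (g : M) = Complex.I • 1 ∨ ∃ j, (g : M) = XMat n j ∨ (g : M) = ZMat n j)
    (hh : (h : M) = Complex.I • 1 ∨ ∃ j, (h : M) = XMat n j ∨ (h : M) = ZMat n j) :
    PRel g h := by
  rcases hg with hg | ⟨j, hg | hg⟩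
  · exact ⟨1, by rw [hg]; simp [smul_mul_assoc, mul_smul_comm]⟩
  all_goals rcases hh with hh | ⟨l, hh | hh⟩
  · exact ⟨1, by rw [hh]; simp [smul_mul_assoc, mul_smul_comm]⟩
  · exact ⟨1, by rw [hg, hh, Units.val_one, one_smul]; exact XMat_mul_XMat n j l⟩
  · refine ⟨if j = l then -1 else 1, ?_⟩
    rw [hg, hh, XMat_mul_ZMat n j l]
    split <;> simp
  · exact ⟨1, by rw [hh]; simp [smul_mul_assoc, mul_smul_comm]⟩
  · -- g = Z_j, h = X_l : use XMat_mul_ZMat with roles swapped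
    refine ⟨if l = j then -1 else 1, ?_⟩
    rw [hg, hh]
    have := XMat_mul_ZMat n l j
    rw [this]
    split <;> rename_i hc <;> simp [hc] <;> module
  · refine ⟨1, ?_⟩
    rw [hg, hh, Units.val_one, one_smul, ZMat_diag, ZMat_diag,
      Matrix.diagonal_mul_diagonal, Matrix.diagonal_mul_diagonal]
    exact congrArg Matrix.diagonal (funext fun i => mul_comm _ _)

lemma pauli_Rel {U V : UG} (hU : U ∈ PauliGroup n) (hV : V ∈ PauliGroup n) :
    PRel U V := by
  revert V
  have key : ∀ V, V ∈ PauliGroup n → ∀ U : UG,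
      ((U : M) = Complex.I • 1 ∨ ∃ j, (U : M) = XMat n j ∨ (U : M) = ZMat n j) →
      PRel U V := by
    intro V hV
    refine Subgroup.closure_induction (fun x hx U hU => gen_Rel hU hx)
      (fun U _ => Rel_one_right)
      (fun x y _ _ hx hy U hU => Rel_mul_right (hx U hU) (hy U hU))
      (fun x _ hx U hU => Rel_inv_right (hx U hU)) hV
  intro V hV
  refine Subgroup.closure_induction (fun x hx => key V hV x hx)
    Rel_one
    (fun x y _ _ hx hy => Rel_mul hx hy)
    (fun x _ hx => Rel_inv hx) hU

lemma pauli_commutator_scalar {U P : UG} (hU : U ∈ PauliGroup n)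
    (hP : P ∈ PauliGroup n) :
    ∃ c : ℂ, ((U * P * U⁻¹ * P⁻¹ : UG) : M) = c • 1 := by
  obtain ⟨c, hc⟩ := pauli_Rel hU hP
  refine ⟨c, ?_⟩
  rw [MulMemClass.coe_mul, MulMemClass.coe_mul, MulMemClass.coe_mul, hc,
    smul_mul_assoc, smul_mul_assoc, mul_assoc ((P : M)) _ _, coe_mul_inv, mul_one,
    coe_mul_inv]

lemma clifford_mul_pauli : ∀ {m : ℕ} {A P : UG}, A ∈ CliffordHierarchy n m →
    P ∈ PauliGroup n → A * P ∈ CliffordHierarchy n m := by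
  intro m A P hA hP
  match m with
  | 0 => trivial
  | 1 => exact mul_mem hA hP
  | (k + 2) =>
    intro Q hQ
    have h1 : (A * P) * Q * (A * P)⁻¹ = A * (P * Q * P⁻¹) * A⁻¹ := by group
    rw [h1]
    exact hA _ (mul_mem (mul_mem hP hQ) (inv_mem hP))

lemma seq_aux : ∀ Ps : List UG, Ps ≠ [] → ∀ U : UG,
    U ∈ CliffordHierarchy n Ps.length → (∀ P ∈ Ps, P ∈ PauliGroup n) →
    ∃ c : ℂ, ((seqComm U Ps : UG) : M) = c • 1 := by
  intro Ps
  induction Ps with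
  | nil => intro h; exact absurd rfl h
  | cons P Ps ih =>
    intro _ U hU hmem
    have hP : P ∈ PauliGroup n := hmem P (by simp)
    rw [show seqComm U (P :: Ps) = seqComm (U * P * U⁻¹ * P⁻¹) Ps from rfl]
    by_cases hPs : Ps = []
    · subst hPs
      exact pauli_commutator_scalar hU hP
    · obtain ⟨m, hm⟩ : ∃ m, Ps.length = m + 1 := by
        cases Ps with
        | nil => exact absurd rfl hPs
        | cons Q Ps' => exact ⟨Ps'.length, rfl⟩
      have hU' : U ∈ CliffordHierarchy n (m + 2) := by
        have : (P :: Ps).length = m + 2 := by simp [hm]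
        rwa [this] at hU
      have h2 : U * P * U⁻¹ ∈ CliffordHierarchy n (m + 1) := hU' P hP
      have h3 : U * P * U⁻¹ * P⁻¹ ∈ CliffordHierarchy n (m + 1) :=
        clifford_mul_pauli h2 (inv_mem hP)
      exact ih hPs _ (by rw [hm]; exact h3)
        (fun Q hQ => hmem Q (List.mem_cons_of_mem _ hQ))

end Aux

/-- If `U` lies in the `k`-th level of the Clifford hierarchy, then for any elements
`P₁, …, P_k` of the Pauli group, the `k`-fold sequential group commutator of `U` with
`P₁, …, P_k` is a scalar multiple of the identity matrix. -/
theorem cliffordHierarchy_seqComm_scalar (n : ℕ) (hn : 1 ≤ n) (k : ℕ) (hk : 1 ≤ k)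
    (U : Matrix.unitaryGroup (Fin n → Fin 2) ℂ) (hU : U ∈ CliffordHierarchy n k)
    (Ps : List (Matrix.unitaryGroup (Fin n → Fin 2) ℂ)) (hlen : Ps.length = k)
    (hPs : ∀ P ∈ Ps, P ∈ PauliGroup n) :
    ∃ c : ℂ, (↑(seqComm U Ps) : Matrix (Fin n → Fin 2) (Fin n → Fin 2) ℂ)
      = c • (1 : Matrix (Fin n → Fin 2) (Fin n → Fin 2) ℂ) := by
  subst hlen
  have hne : Ps ≠ [] := by
    intro h; rw [h] at hk; simp at hk
  exact seq_aux Ps hne U hU hPs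
end

section
/- For every n ≥ 1, if a unitary U ∈ U(2^n) has the property that for every P in the n-qubit Pauli group P_n the group commutator U P U⁻¹ P⁻¹ is a scalar multiple of the identity matrix, then U itself is a scalar multiple of an element of P_n; that is, U = c·Q for some complex number c of modulus 1 and some Q ∈ P_n. -/
/-!
Index the Pauli operators by `a, b ∈ 𝔽₂ⁿ` as `Z^b X^a`, the shift `v ↦ v + a` of the
computational basis weighted by `(-1)^(b ⬝ v)`; two of them commute up to the sign
`(-1)^(b' ⬝ a + b ⬝ a')`. As `X_j` and `Z_j` are involutions, the scalar commutators of `U` with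
them are signs, and `a, b` can be chosen so that `Q = Z^b X^a` has the same commutators with every
`X_j` and `Z_j` as `U`. Then `Q⁻¹ U` commutes with the whole Pauli group: commuting with every
`Z^b` makes it diagonal, and commuting with every `X^a` makes its diagonal constant. So
`U = d Q` for a scalar `d`, of modulus one since `Q⁻¹ U` is unitary.
-/

open Matrix
open scoped commutatorElement

theorem Matrix.smul_one_eq_one_iff {ι R : Type*} [DecidableEq ι] [Nonempty ι] [Semiring R]
    {c : R} : c • (1 : Matrix ι ι R) = 1 ↔ c = 1 := by
  refine ⟨fun h => ?_, fun h => by rw [h, one_smul]⟩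
  simpa using congrFun (congrFun h (Classical.arbitrary ι)) (Classical.arbitrary ι)

section UnitaryCommutator

variable {ι R : Type*} [Fintype ι] [DecidableEq ι] [CommRing R] [StarRing R]

theorem coe_commutatorElement_eq_smul_one_iff {g h : unitaryGroup ι R} {c : R} :
    (↑⁅g, h⁆ : Matrix ι ι R) = c • 1 ↔
      (g : Matrix ι ι R) * h = c • ((h : Matrix ι ι R) * g) := by
  have hgh : ⁅g, h⁆ = g * h * (h * g)⁻¹ := by group
  constructor
  · intro hc
    have : g * h = ⁅g, h⁆ * (h * g) := by group
    rw [← Submonoid.coe_mul, this, Submonoid.coe_mul, hc, smul_mul_assoc, one_mul]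
    rfl
  · intro hc
    rw [hgh, Submonoid.coe_mul, Submonoid.coe_mul, hc, smul_mul_assoc, ← Submonoid.coe_mul,
      ← Submonoid.coe_mul, mul_inv_cancel]
    rfl

theorem mul_self_eq_one_of_coe_commutatorElement [Nonempty ι] {g h : unitaryGroup ι R} {c : R}
    (hc : (↑⁅g, h⁆ : Matrix ι ι R) = c • 1) (hh : h * h = 1) : c * c = 1 := by
  set G : Matrix ι ι R := ↑g
  set H : Matrix ι ι R := ↑h
  have hGH : G * H = c • (H * G) := coe_commutatorElement_eq_smul_one_iff.1 hc
  have hHH : H * H = 1 := congrArg Subtype.val hh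
  have hG : (c * c) • G = G := calc
    (c * c) • G = c • (H * (c • (H * G))) := by
      rw [mul_smul_comm, smul_smul, ← mul_assoc, hHH, one_mul]
    _ = c • (H * (G * H)) := by rw [← hGH]
    _ = G * H * H := by rw [← mul_assoc, ← smul_mul_assoc, ← hGH]
    _ = G := by rw [mul_assoc, hHH, mul_one]
  rw [← smul_one_eq_one_iff (ι := ι), ← (mem_unitaryGroup_iff.1 g.2), ← smul_mul_assoc, hG]

theorem smul_one_mem_unitaryGroup_iff [Nonempty ι] {c : R} :
    c • (1 : Matrix ι ι R) ∈ unitaryGroup ι R ↔ c ∈ unitary R := by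
  rw [mem_unitaryGroup_iff', Unitary.mem_iff_star_mul_self, star_smul, star_one, smul_mul_smul_comm,
    one_mul, smul_one_eq_one_iff]

end UnitaryCommutator

theorem commute_inv_mul_of_commutatorElement_eq {G : Type*} [Group G] {u q p : G}
    (h : ⁅u, p⁆ = ⁅q, p⁆) : Commute (q⁻¹ * u) p := by
  simp only [commutatorElement_def] at h
  calc q⁻¹ * u * p = q⁻¹ * (u * p * u⁻¹ * p⁻¹) * p * u := by group
    _ = q⁻¹ * (q * p * q⁻¹ * p⁻¹) * p * u := by rw [h]
    _ = p * (q⁻¹ * u) := by group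

theorem mem_of_map_single {ι G : Type*} [Finite ι] [DecidableEq ι] [Group G] {H : Subgroup G}
    {f : (ι → Fin 2) → G} (hzero : f 0 = 1) (hadd : ∀ x y, f (x + y) = f x * f y)
    (hsingle : ∀ i, f (Pi.single i 1) ∈ H) (x : ι → Fin 2) : f x ∈ H := by
  induction x using Pi.single_induction with
  | zero => rw [hzero]; exact one_mem H
  | add x y hx hy => rw [hadd]; exact mul_mem hx hy
  | single i m =>
    fin_cases m
    · simp [hzero]
    · exact hsingle i

namespace Pauli

open Fin.CommRing

def sign (x : Fin 2) : ℂ := if x = 1 then -1 else 1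

@[simp] theorem sign_zero : sign 0 = 1 := rfl

theorem sign_add (x y : Fin 2) : sign (x + y) = sign x * sign y := by
  fin_cases x <;> fin_cases y <;> simp [sign]

theorem sign_mul_self (x : Fin 2) : sign x * sign x = 1 := by
  fin_cases x <;> simp [sign]

theorem star_sign (x : Fin 2) : star (sign x) = sign x := by
  fin_cases x <;> simp [sign]

theorem sign_injective : Function.Injective sign := by
  intro x y; fin_cases x <;> fin_cases y <;> norm_num [sign]

theorem exists_sign_eq {c : ℂ} (hc : c * c = 1) : ∃ x, sign x = c := by
  rcases mul_self_eq_one_iff.1 hc with rfl | rfl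
  exacts [⟨0, rfl⟩, ⟨1, rfl⟩]

variable {n : ℕ}

theorem add_self_eq_zero (a : Fin n → Fin 2) : a + a = 0 := by
  funext i
  show a i + a i = 0
  generalize a i = x
  revert x; decide

theorem eq_add_comm {v w a : Fin n → Fin 2} : w = v + a ↔ v = w + a := by
  constructor <;> rintro rfl <;> rw [add_assoc, add_self_eq_zero, add_zero]

def pauliMat (a b : Fin n → Fin 2) : Matrix (Fin n → Fin 2) (Fin n → Fin 2) ℂ :=
  of fun v w => if w = v + a then sign (b ⬝ᵥ v) else 0

theorem pauliMat_mul_apply (a b : Fin n → Fin 2)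
    (M : Matrix (Fin n → Fin 2) (Fin n → Fin 2) ℂ)
    (v w : Fin n → Fin 2) : (pauliMat a b * M) v w = sign (b ⬝ᵥ v) * M (v + a) w := by
  simp [pauliMat, mul_apply]

theorem mul_pauliMat_apply (a b : Fin n → Fin 2)
    (M : Matrix (Fin n → Fin 2) (Fin n → Fin 2) ℂ)
    (v w : Fin n → Fin 2) : (M * pauliMat a b) v w = M v (w + a) * sign (b ⬝ᵥ (w + a)) := by
  simp [pauliMat, mul_apply, eq_add_comm (w := w)]

theorem pauliMat_mul (a b a' b' : Fin n → Fin 2) :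
    pauliMat a b * pauliMat a' b' = sign (b' ⬝ᵥ a) • pauliMat (a + a') (b + b') := by
  ext v w
  rw [pauliMat_mul_apply]
  simp only [pauliMat, of_apply, Matrix.smul_apply, smul_eq_mul, add_assoc, dotProduct_add,
    add_dotProduct, sign_add]
  split_ifs <;> ring

theorem pauliMat_zero_zero :
    pauliMat 0 0 = (1 : Matrix (Fin n → Fin 2) (Fin n → Fin 2) ℂ) := by
  ext v w; simp [pauliMat, one_apply, eq_comm]

theorem star_pauliMat (a b : Fin n → Fin 2) :
    star (pauliMat a b) = sign (b ⬝ᵥ a) • pauliMat a b := by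
  ext v w
  simp only [star_apply, pauliMat, of_apply, Matrix.smul_apply, smul_eq_mul, eq_add_comm (w := v)]
  split_ifs with h
  · rw [star_sign, h, dotProduct_add, sign_add, mul_comm]
  · simp

theorem pauliMat_mem_unitaryGroup (a b : Fin n → Fin 2) :
    pauliMat a b ∈ unitaryGroup (Fin n → Fin 2) ℂ := by
  rw [mem_unitaryGroup_iff, star_pauliMat, mul_smul_comm, pauliMat_mul, smul_smul, sign_mul_self,
    one_smul, add_self_eq_zero, add_self_eq_zero, pauliMat_zero_zero]

theorem pauliMat_mul_comm (a b a' b' : Fin n → Fin 2) :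
    pauliMat a b * pauliMat a' b' =
      sign (b' ⬝ᵥ a + b ⬝ᵥ a') • (pauliMat a' b' * pauliMat a b) := by
  rw [pauliMat_mul, pauliMat_mul, smul_smul, sign_add, mul_assoc, sign_mul_self, mul_one,
    add_comm a, add_comm b]

theorem XMat_eq_pauliMat (j : Fin n) : XMat n j = pauliMat (Pi.single j 1) 0 := by
  have flip_iff (x y : Fin 2) : x ≠ y ↔ y = x + 1 := by revert x y; decide
  ext v w
  simp only [XMat, pauliMat, of_apply, zero_dotProduct, sign_zero]
  congr 1
  simp only [funext_iff, Pi.add_apply, Pi.single_apply, eq_iff_iff]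
  constructor
  · rintro ⟨hj, hi⟩ i
    by_cases hij : i = j
    · subst hij; simpa using (flip_iff _ _).1 hj
    · simp [hij, hi i hij]
  · intro h
    exact ⟨(flip_iff _ _).2 (by simpa using h j), fun i hij => by simpa [hij] using (h i).symm⟩

theorem ZMat_eq_pauliMat (j : Fin n) : ZMat n j = pauliMat 0 (Pi.single j 1) := by
  ext v w
  simp [ZMat, pauliMat, single_dotProduct, sign, eq_comm]

theorem eq_smul_one_of_forall_commute {M : Matrix (Fin n → Fin 2) (Fin n → Fin 2) ℂ}
    (h : ∀ a b, Commute M (pauliMat a b)) : M = M 0 0 • 1 := by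
  have key (a b v w : Fin n → Fin 2) :
      M v (w + a) * sign (b ⬝ᵥ (w + a)) = sign (b ⬝ᵥ v) * M (v + a) w := by
    rw [← mul_pauliMat_apply, ← pauliMat_mul_apply, (h a b).eq]
  ext v w
  rw [Matrix.smul_apply, one_apply, smul_eq_mul]
  split_ifs with hvw
  · subst hvw
    simpa [add_self_eq_zero] using (key v 0 0 v).symm
  · obtain ⟨j, hj⟩ := Function.ne_iff.1 hvw
    have hsign : sign (w j) - sign (v j) ≠ 0 := sub_ne_zero.2 (sign_injective.ne (Ne.symm hj))
    have := key 0 (Pi.single j 1) v w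
    simp only [add_zero, single_dotProduct, one_mul] at this
    simpa [hsign] using (show M v w * (sign (w j) - sign (v j)) = 0 by rw [mul_sub, this]; ring)

def pauli (a b : Fin n → Fin 2) : unitaryGroup (Fin n → Fin 2) ℂ :=
  ⟨pauliMat a b, pauliMat_mem_unitaryGroup a b⟩

theorem coe_commutatorElement_pauli (a b a' b' : Fin n → Fin 2) :
    (↑⁅pauli a b, pauli a' b'⁆ : Matrix (Fin n → Fin 2) (Fin n → Fin 2) ℂ)
      = sign (b' ⬝ᵥ a + b ⬝ᵥ a') • 1 :=
  coe_commutatorElement_eq_smul_one_iff.2 (pauliMat_mul_comm a b a' b')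

theorem pauli_add_add {a b a' b' : Fin n → Fin 2} (h : b' ⬝ᵥ a = 0) :
    pauli (a + a') (b + b') = pauli a b * pauli a' b' :=
  Subtype.ext <| by simp [pauli, pauliMat_mul, h]

theorem pauli_zero_zero : pauli 0 0 = (1 : unitaryGroup (Fin n → Fin 2) ℂ) :=
  Subtype.ext pauliMat_zero_zero

theorem pauli_mul_self {a b : Fin n → Fin 2} (h : b ⬝ᵥ a = 0) :
    pauli a b * pauli a b = 1 := by
  rw [← pauli_add_add h, add_self_eq_zero, add_self_eq_zero, pauli_zero_zero]

theorem pauli_mem (a b : Fin n → Fin 2) : pauli a b ∈ PauliGroup n := by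
  have hX : ∀ a, pauli a 0 ∈ PauliGroup n := mem_of_map_single pauli_zero_zero
    (fun x y => by simpa using pauli_add_add (a' := y) (b := 0) (b' := 0) (zero_dotProduct x))
    (fun j => Subgroup.subset_closure (Or.inr ⟨j, Or.inl (XMat_eq_pauliMat j).symm⟩))
  have hZ : ∀ b, pauli 0 b ∈ PauliGroup n := mem_of_map_single pauli_zero_zero
    (fun x y => by simpa using pauli_add_add (a := 0) (a' := 0) (b := x) (dotProduct_zero y))
    (fun j => Subgroup.subset_closure (Or.inr ⟨j, Or.inr (ZMat_eq_pauliMat j).symm⟩))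
  simpa [← pauli_add_add] using mul_mem (hZ b) (hX a)

theorem exists_eq_smul_one_of_commute {M : unitaryGroup (Fin n → Fin 2) ℂ}
    (hX : ∀ j, Commute M (pauli (Pi.single j 1) 0))
    (hZ : ∀ j, Commute M (pauli 0 (Pi.single j 1))) :
    ∃ d : ℂ, ‖d‖ = 1 ∧
      (M : Matrix (Fin n → Fin 2) (Fin n → Fin 2) ℂ) = d • 1 := by
  have hcent : PauliGroup n ≤ Subgroup.centralizer {M} := by
    refine Subgroup.closure_le _ |>.2 ?_
    rintro g (hI | ⟨j, hXj | hZj⟩) <;>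
      rw [SetLike.mem_coe, Subgroup.mem_centralizer_singleton_iff]
    · exact Subtype.ext (by simp [hI])
    · obtain rfl : g = pauli (Pi.single j 1) 0 := Subtype.ext (hXj.trans (XMat_eq_pauliMat j))
      exact (hX j).eq.symm
    · obtain rfl : g = pauli 0 (Pi.single j 1) := Subtype.ext (hZj.trans (ZMat_eq_pauliMat j))
      exact (hZ j).eq.symm
  have hM := eq_smul_one_of_forall_commute
    (M := (M : Matrix (Fin n → Fin 2) (Fin n → Fin 2) ℂ)) fun a b =>
      congrArg Subtype.val (Subgroup.mem_centralizer_singleton_iff.1 (hcent (pauli_mem a b))).symm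
  exact ⟨_, CStarRing.norm_of_mem_unitary (smul_one_mem_unitaryGroup_iff.1 (hM ▸ M.2)), hM⟩

end Pauli

open Pauli

theorem scalar_commutators_imp_pauli_general (n : ℕ)
    (U : Matrix.unitaryGroup (Fin n → Fin 2) ℂ)
    (hU : ∀ P ∈ PauliGroup n, ∃ c : ℂ,
      (↑(U * P * U⁻¹ * P⁻¹) : Matrix (Fin n → Fin 2) (Fin n → Fin 2) ℂ)
        = c • (1 : Matrix (Fin n → Fin 2) (Fin n → Fin 2) ℂ)) :
    ∃ (c : ℂ) (Q : Matrix.unitaryGroup (Fin n → Fin 2) ℂ), ‖c‖ = 1 ∧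
      Q ∈ PauliGroup n ∧
      (U : Matrix (Fin n → Fin 2) (Fin n → Fin 2) ℂ)
        = c • (Q : Matrix (Fin n → Fin 2) (Fin n → Fin 2) ℂ) := by
  have hsign (P) (hP : P ∈ PauliGroup n) (hP2 : P * P = 1) :
      ∃ x : Fin 2,
        (↑⁅U, P⁆ : Matrix (Fin n → Fin 2) (Fin n → Fin 2) ℂ) = sign x • 1 := by
    obtain ⟨c, hc⟩ := hU P hP
    obtain ⟨x, rfl⟩ := exists_sign_eq (mul_self_eq_one_of_coe_commutatorElement hc hP2)
    exact ⟨x, hc⟩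
  choose b hb using fun j =>
    hsign _ (pauli_mem (Pi.single j 1) 0) (pauli_mul_self (zero_dotProduct _))
  choose a ha using fun j =>
    hsign _ (pauli_mem 0 (Pi.single j 1)) (pauli_mul_self (dotProduct_zero _))
  obtain ⟨d, hd, hM⟩ := exists_eq_smul_one_of_commute (M := (pauli a b)⁻¹ * U)
    (fun j => commute_inv_mul_of_commutatorElement_eq <| Subtype.ext <| by
      rw [hb, coe_commutatorElement_pauli]; simp)
    (fun j => commute_inv_mul_of_commutatorElement_eq <| Subtype.ext <| by
      rw [ha, coe_commutatorElement_pauli]; simp)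
  refine ⟨d, pauli a b, hd, pauli_mem a b, ?_⟩
  rw [← mul_inv_cancel_left (pauli a b) U, Submonoid.coe_mul, hM, mul_smul_one]

/-- If a unitary `U ∈ U(2^n)` is such that its group commutator with every element of the
Pauli group is a scalar multiple of the identity, then `U` is a scalar multiple of an
element of the Pauli group: `U = c • Q` with `|c| = 1` and `Q` in the Pauli group. -/
theorem scalar_commutators_imp_pauli (n : ℕ) (hn : 1 ≤ n)
    (U : Matrix.unitaryGroup (Fin n → Fin 2) ℂ)
    (hU : ∀ P ∈ PauliGroup n, ∃ c : ℂ,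
      (↑(U * P * U⁻¹ * P⁻¹) : Matrix (Fin n → Fin 2) (Fin n → Fin 2) ℂ)
        = c • (1 : Matrix (Fin n → Fin 2) (Fin n → Fin 2) ℂ)) :
    ∃ (c : ℂ) (Q : Matrix.unitaryGroup (Fin n → Fin 2) ℂ), ‖c‖ = 1 ∧
      Q ∈ PauliGroup n ∧
      (U : Matrix (Fin n → Fin 2) (Fin n → Fin 2) ℂ)
        = c • (Q : Matrix (Fin n → Fin 2) (Fin n → Fin 2) ℂ) :=
  scalar_commutators_imp_pauli_general n U hU
end
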